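/- Every nonempty Π⁰₁ class contains a member of hyperimmune-free degree: if P is a nonempty Π⁰₁ class of infinite binary sequences, then there exists A ∈ P such that for every total function f : ℕ → ℕ with f ≤_T A, there is a computable function g : ℕ → ℕ with g(n) ≥ f(n) for all n. -/

import Mathlib

/-- Partial functions recursive in an oracle `O : ℕ → ℕ` (oracle partial recursion). -/
inductive OracleRecursiveIn (O : ℕ → ℕ) : (ℕ →. ℕ) → Prop
  | zero : OracleRecursiveIn O (pure 0)
  | succ : OracleRecursiveIn O Nat.succ
  | left : OracleRecursiveIn O ↑fun n : ℕ => n.unpair.1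
  | right : OracleRecursiveIn O ↑fun n : ℕ => n.unpair.2
  | oracle : OracleRecursiveIn O ↑O
  | pair {f g} : OracleRecursiveIn O f → OracleRecursiveIn O g →
      OracleRecursiveIn O fun n => Nat.pair <$> f n <*> g n
  | comp {f g} : OracleRecursiveIn O f → OracleRecursiveIn O g →
      OracleRecursiveIn O fun n => g n >>= f
  | prec {f g} : OracleRecursiveIn O f → OracleRecursiveIn O g →
      OracleRecursiveIn O (Nat.unpaired fun a n =>
        n.rec (f a) fun y IH => do let i ← IH; g (Nat.pair a (Nat.pair y i)))
  | rfind {f} : OracleRecursiveIn O f →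
      OracleRecursiveIn O fun a => Nat.rfind fun n => (fun m => m = 0) <$> f (Nat.pair a n)

/-- The oracle (characteristic function on `ℕ`) associated to a point of Cantor space. -/
def boolOracle (A : ℕ → Bool) : ℕ → ℕ := fun n => (A n).toNat

/-- Turing reducibility `A ≤ᵀ B` for points of Cantor space. -/
def TuringLE (A B : ℕ → Bool) : Prop :=
  OracleRecursiveIn (boolOracle B) fun n => Part.some ((A n).toNat)

/-- Strict Turing reducibility `A <ᵀ B`. -/
def TuringLT (A B : ℕ → Bool) : Prop :=
  TuringLE A B ∧ ¬ TuringLE B A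

/-- `A` is computable iff it is reducible to the empty oracle. -/
def ComputableSet (A : ℕ → Bool) : Prop :=
  TuringLE A fun _ => false

/-- `P` is a `Π⁰₁` class: the set of infinite paths through a computable,
downward-closed set of finite binary strings. -/
def IsPi01Class (P : Set (ℕ → Bool)) : Prop :=
  ∃ T : List Bool → Bool, Computable T ∧
    (∀ σ τ : List Bool, σ <+: τ → T τ = true → T σ = true) ∧
    ∀ A : ℕ → Bool, A ∈ P ↔ ∀ n : ℕ, T ((List.range n).map A) = true

/-!
Jockusch–Soare forcing with `Π⁰₁` classes. Enumerate the oracle programs `Φ_e` and shrink the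
tree of the given class to infinite computable subtrees `T₀ ⊇ T₁ ⊇ ⋯`. At stage `e`, if for some
`n` the strings of `T_e` along which `Φ_e(n)` has not yet been seen to converge form an infinite
tree, pass to that tree: `Φ_e^A(n)` diverges for each of its paths `A`. Otherwise, for every `n`
some level of `T_e` consists of strings along which `Φ_e(n)` converges, and the maximum of the
values found there is a computable bound for `Φ_e^A(n)`, uniformly in the paths `A` of `T_e`.
By compactness of Cantor space the trees have a common path.
-/

open Filter
open Nat.Partrec (Code)

theorem mem_natPair_seq_iff {x y : Part ℕ} {a : ℕ} :
    a ∈ (Nat.pair <$> x <*> y) ↔ ∃ u ∈ x, ∃ v ∈ y, a = Nat.pair u v := by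
  simp [Seq.seq, Part.mem_bind_iff, Part.mem_map_iff, eq_comm]

theorem mem_rfind_eq_zero_iff {F : ℕ →. ℕ} {a : ℕ} :
    a ∈ Nat.rfind (fun k => (fun m => decide (m = 0)) <$> F k) ↔
      0 ∈ F a ∧ ∀ k < a, ∃ v ∈ F k, v ≠ 0 := by
  refine Nat.mem_rfind.trans ?_
  simp [Part.mem_map_iff]

inductive OracleCode : Type
  | zero | succ | left | right | oracle
  | pair : OracleCode → OracleCode → OracleCode
  | comp : OracleCode → OracleCode → OracleCode
  | prec : OracleCode → OracleCode → OracleCode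
  | rfind : OracleCode → OracleCode

namespace OracleCode

def eval (O : ℕ →. ℕ) : OracleCode → ℕ →. ℕ
  | zero => pure 0
  | succ => Nat.succ
  | left => ↑fun n : ℕ => n.unpair.1
  | right => ↑fun n : ℕ => n.unpair.2
  | oracle => O
  | pair cf cg => fun n => Nat.pair <$> eval O cf n <*> eval O cg n
  | comp cf cg => fun n => eval O cg n >>= eval O cf
  | prec cf cg =>
      Nat.unpaired fun a n =>
        n.rec (eval O cf a) fun y IH => do let i ← IH; eval O cg (Nat.pair a (Nat.pair y i))
  | rfind cf => fun a => Nat.rfind fun n => (fun m => m = 0) <$> eval O cf (Nat.pair a n)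

theorem exists_eval_eq {O : ℕ → ℕ} {f : ℕ →. ℕ} (h : OracleRecursiveIn O f) :
    ∃ c : OracleCode, c.eval O = f := by
  induction h with
  | zero => exact ⟨zero, rfl⟩
  | succ => exact ⟨succ, rfl⟩
  | left => exact ⟨left, rfl⟩
  | right => exact ⟨right, rfl⟩
  | oracle => exact ⟨oracle, rfl⟩
  | pair _ _ hf hg =>
    obtain ⟨cf, rfl⟩ := hf
    obtain ⟨cg, rfl⟩ := hg
    exact ⟨pair cf cg, rfl⟩
  | comp _ _ hf hg =>
    obtain ⟨cf, rfl⟩ := hf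
    obtain ⟨cg, rfl⟩ := hg
    exact ⟨comp cf cg, rfl⟩
  | prec _ _ hf hg =>
    obtain ⟨cf, rfl⟩ := hf
    obtain ⟨cg, rfl⟩ := hg
    exact ⟨prec cf cg, rfl⟩
  | rfind _ hf =>
    obtain ⟨cf, rfl⟩ := hf
    exact ⟨rfind cf, rfl⟩

def toNat : OracleCode → ℕ
  | zero => 0
  | succ => 1
  | left => 2
  | right => 3
  | oracle => 4
  | pair cf cg => 4 * Nat.pair cf.toNat cg.toNat + 5
  | comp cf cg => 4 * Nat.pair cf.toNat cg.toNat + 6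
  | prec cf cg => 4 * Nat.pair cf.toNat cg.toNat + 7
  | rfind cf => 4 * cf.toNat + 8

def ofNat : ℕ → OracleCode
  | 0 => zero
  | 1 => succ
  | 2 => left
  | 3 => right
  | 4 => oracle
  | n + 5 =>
    have h : n / 4 < n + 5 := by omega
    have : (n / 4).unpair.1 < n + 5 := (Nat.unpair_left_le _).trans_lt h
    have : (n / 4).unpair.2 < n + 5 := (Nat.unpair_right_le _).trans_lt h
    match n % 4 with
    | 0 => pair (ofNat (n / 4).unpair.1) (ofNat (n / 4).unpair.2)
    | 1 => comp (ofNat (n / 4).unpair.1) (ofNat (n / 4).unpair.2)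
    | 2 => prec (ofNat (n / 4).unpair.1) (ofNat (n / 4).unpair.2)
    | _ => rfind (ofNat (n / 4))

theorem ofNat_toNat (c : OracleCode) : ofNat c.toNat = c := by
  induction c <;> simp_all [toNat, ofNat, Nat.mul_add_div]

theorem eval_prec_zero (O : ℕ →. ℕ) (cf cg : OracleCode) (x : ℕ) :
    (prec cf cg).eval O (Nat.pair x 0) = cf.eval O x := by
  simp [eval, Nat.unpaired]

theorem eval_prec_succ (O : ℕ →. ℕ) (cf cg : OracleCode) (x k : ℕ) :
    (prec cf cg).eval O (Nat.pair x (k + 1)) =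
      ((prec cf cg).eval O (Nat.pair x k)).bind
        fun i => cg.eval O (Nat.pair x (Nat.pair k i)) := by
  simp only [eval, Nat.unpaired, Nat.unpair_pair]
  rfl

/-- The use principle: a convergent computation asks only finitely many oracle queries. -/
theorem eventually_mem_eval {ι : Type*} {l : Filter ι} {O : ℕ →. ℕ} {Os : ι → ℕ →. ℕ}
    (hO : ∀ q, ∀ a ∈ O q, ∀ᶠ i in l, a ∈ Os i q) (c : OracleCode) {n a : ℕ}
    (h : a ∈ c.eval O n) : ∀ᶠ i in l, a ∈ c.eval (Os i) n := by
  induction c generalizing n a with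
  | zero | succ | left | right => exact Eventually.of_forall fun _ => h
  | oracle => exact hO n a h
  | pair cf cg ihf ihg =>
    obtain ⟨u, hu, v, hv, rfl⟩ := mem_natPair_seq_iff.1 h
    filter_upwards [ihf hu, ihg hv] with i hui hvi
    exact mem_natPair_seq_iff.2 ⟨u, hui, v, hvi, rfl⟩
  | comp cf cg ihf ihg =>
    obtain ⟨u, hu, ha⟩ := Part.mem_bind_iff.1 h
    filter_upwards [ihg hu, ihf ha] with i hui hai
    exact Part.mem_bind_iff.2 ⟨u, hui, hai⟩
  | prec cf cg ihf ihg =>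
    obtain ⟨x, k, rfl⟩ : ∃ x k, n = Nat.pair x k := ⟨_, _, (Nat.pair_unpair n).symm⟩
    induction k generalizing a with
    | zero => simp only [eval_prec_zero] at h ⊢; exact ihf h
    | succ k ihk =>
      simp only [eval_prec_succ] at h ⊢
      obtain ⟨u, hu, ha⟩ := Part.mem_bind_iff.1 h
      filter_upwards [ihk hu, ihg ha] with i hui hai
      exact Part.mem_bind_iff.2 ⟨u, hui, hai⟩
  | rfind cf ihf =>
    obtain ⟨h0, hlt⟩ := mem_rfind_eq_zero_iff.1 h
    have hlt' : ∀ᶠ i in l, ∀ k ∈ Set.Iio a, ∃ v ∈ cf.eval (Os i) (Nat.pair n k), v ≠ 0 := by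
      refine (Set.finite_Iio a).eventually_all.2 fun k hk => ?_
      obtain ⟨v, hv, hv0⟩ := hlt k hk
      filter_upwards [ihf hv] with i hvi using ⟨v, hvi, hv0⟩
    filter_upwards [ihf h0, hlt'] with i h0i hlti
    exact mem_rfind_eq_zero_iff.2 ⟨h0i, hlti⟩

theorem eval_mono (c : OracleCode) {O₁ O₂ : ℕ →. ℕ} (hle : ∀ q, O₁ q ≤ O₂ q) (n : ℕ) :
    c.eval O₁ n ≤ c.eval O₂ n := fun _ h =>
  eventually_pure.1 <| eventually_mem_eval (l := pure ()) (Os := fun _ => O₂)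
    (fun q _ ha => eventually_pure.2 (hle q _ ha)) c h

end OracleCode

def initSeg (A : ℕ → Bool) (m : ℕ) : List Bool := (List.range m).map A

theorem length_initSeg (A : ℕ → Bool) (m : ℕ) : (initSeg A m).length = m := by simp [initSeg]

theorem take_initSeg (A : ℕ → Bool) {m n : ℕ} (h : m ≤ n) :
    (initSeg A n).take m = initSeg A m := by
  rw [initSeg, initSeg, ← List.map_take, List.take_range, min_eq_left h]

theorem initSeg_prefix (A : ℕ → Bool) {m n : ℕ} (h : m ≤ n) : initSeg A m <+: initSeg A n :=
  take_initSeg A h ▸ List.take_prefix _ _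

theorem getElem?_initSeg (A : ℕ → Bool) {m q : ℕ} (h : q < m) :
    (initSeg A m)[q]? = some (A q) := by
  simp [initSeg, h]

theorem initSeg_eq_ofFn (A : ℕ → Bool) (n : ℕ) :
    initSeg A n = List.ofFn fun i : Fin n => A i := by
  apply List.ext_getElem <;> simp [initSeg]

def stringOracle (σ : List Bool) : ℕ →. ℕ := fun q => (σ[q]?.map Bool.toNat : Option ℕ)

theorem stringOracle_mono {σ τ : List Bool} (h : σ <+: τ) (q : ℕ) :
    stringOracle σ q ≤ stringOracle τ q := by
  intro a ha
  rcases hσ : σ[q]? with _ | b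
  · simp [stringOracle, hσ] at ha
  · obtain ⟨hq, rfl⟩ := List.getElem?_eq_some_iff.1 hσ
    simpa [stringOracle, hσ, List.prefix_iff_getElem?.1 h q hq] using ha

theorem stringOracle_initSeg_le (A : ℕ → Bool) (m q : ℕ) :
    stringOracle (initSeg A m) q ≤ boolOracle A q := by
  intro a ha
  by_cases hq : q < m
  · simpa [stringOracle, boolOracle, getElem?_initSeg A hq, PFun.coe_val] using ha
  · simp [stringOracle, initSeg, hq] at ha

theorem eventually_mem_stringOracle_initSeg (A : ℕ → Bool) (q : ℕ) :
    ∀ a ∈ (boolOracle A : ℕ →. ℕ) q, ∀ᶠ m in atTop, a ∈ stringOracle (initSeg A m) q := by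
  intro a ha
  filter_upwards [eventually_gt_atTop q] with m hm
  simpa [stringOracle, boolOracle, getElem?_initSeg A hm, PFun.coe_val] using ha

theorem partrec_stringOracle : Partrec₂ stringOracle := by
  have : Primrec fun p : List Bool × ℕ => p.1[p.2]?.map Bool.toNat :=
    Primrec.option_map Primrec.list_getElem? ((Primrec.dom_bool Bool.toNat).comp Primrec.snd).to₂
  exact this.to_comp.ofOption

theorem exists_code_stringOracle :
    ∃ c : Code, ∀ σ, (c.curry (Encodable.encode σ)).eval = stringOracle σ := by
  have hdecode : Computable fun p : ℕ => (Encodable.decode (α := List Bool) p.unpair.1).getD [] :=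
    (Computable.option_getD (Computable.decode.comp Computable.fst) (Computable.const [])).comp
      Computable.unpair
  obtain ⟨c, hc⟩ := Code.exists_code.1 <| Partrec.nat_iff.1 <|
    partrec_stringOracle.comp hdecode (Computable.snd.comp Computable.unpair)
  exact ⟨c, fun σ => by funext q; simp [Code.eval_curry, hc]⟩

noncomputable def stringCode (σ : List Bool) : Code :=
  exists_code_stringOracle.choose.curry (Encodable.encode σ)

theorem eval_stringCode (σ : List Bool) : (stringCode σ).eval = stringOracle σ :=
  exists_code_stringOracle.choose_spec σ

theorem primrec_stringCode : Primrec stringCode :=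
  Code.primrec₂_curry.comp (Primrec.const _) Primrec.encode

namespace OracleCode

noncomputable def toCode (c : OracleCode) (σ : List Bool) : Code :=
  match c with
  | zero => .zero
  | succ => .succ
  | left => .left
  | right => .right
  | oracle => stringCode σ
  | pair cf cg => .pair (cf.toCode σ) (cg.toCode σ)
  | comp cf cg => .comp (cf.toCode σ) (cg.toCode σ)
  | prec cf cg => .prec (cf.toCode σ) (cg.toCode σ)
  | rfind cf => .comp (.rfind' (cf.toCode σ)) (.pair .id .zero)

theorem eval_toCode (c : OracleCode) (σ : List Bool) :
    (c.toCode σ).eval = c.eval (stringOracle σ) := by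
  induction c with
  | zero | succ | left | right => rfl
  | oracle => exact eval_stringCode σ
  | pair cf cg ihf ihg | comp cf cg ihf ihg | prec cf cg ihf ihg =>
    simp only [toCode, Code.eval, ihf, ihg]
    rfl
  | rfind cf ihf =>
    simp only [toCode, Code.eval, Seq.seq, Code.eval_id, Part.map_eq_map, Part.map_some, pure,
      PFun.pure, Part.bind_some, ihf, Part.bind_eq_bind, Nat.unpaired, Nat.unpair_pair, add_zero,
      implies_true, Part.map_id']
    rfl

theorem primrec_toCode (c : OracleCode) : Primrec c.toCode := by
  induction c with
  | zero | succ | left | right => exact Primrec.const _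
  | oracle => exact primrec_stringCode
  | pair cf cg ihf ihg => exact Code.primrec₂_pair.comp ihf ihg
  | comp cf cg ihf ihg => exact Code.primrec₂_comp.comp ihf ihg
  | prec cf cg ihf ihg => exact Code.primrec₂_prec.comp ihf ihg
  | rfind cf ihf =>
    exact Code.primrec₂_comp.comp (Code.primrec_rfind'.comp ihf) (Primrec.const _)

/-- Running `c` along every prefix of `σ`, not just along `σ`, makes convergence monotone in `σ`:
the running time of `stringCode σ` grows with `σ`. -/
noncomputable def approx (c : OracleCode) (σ : List Bool) (n : ℕ) : Option ℕ :=
  ((List.range (σ.length + 1)).filterMap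
    fun i => Code.evaln σ.length (c.toCode (σ.take i)) n).head?

theorem primrec_approx (c : OracleCode) : Primrec₂ c.approx := by
  have hstep : Primrec₂ fun (p : List Bool × ℕ) (i : ℕ) =>
      Code.evaln p.1.length (c.toCode (p.1.take i)) p.2 :=
    Code.primrec_evaln.comp <| ((Primrec.list_length.comp (Primrec.fst.comp Primrec.fst)).pair
      (c.primrec_toCode.comp
        (Primrec.list_take.comp Primrec.snd (Primrec.fst.comp Primrec.fst)))).pair
      (Primrec.snd.comp Primrec.fst)
  exact Primrec.list_head?.comp <| Primrec.listFilterMap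
    (Primrec.list_range.comp (Primrec.succ.comp (Primrec.list_length.comp Primrec.fst))) hstep

theorem mem_eval_of_approx_eq_some {c : OracleCode} {σ : List Bool} {n v : ℕ}
    (h : c.approx σ n = some v) : v ∈ c.eval (stringOracle σ) n := by
  obtain ⟨i, -, hi⟩ := List.mem_filterMap.1 (List.mem_of_head? h)
  have := Code.evaln_sound (Option.mem_def.2 hi)
  rw [eval_toCode] at this
  exact c.eval_mono (stringOracle_mono (List.take_prefix i σ)) n _ this

theorem approx_isSome_iff {c : OracleCode} {σ : List Bool} {n : ℕ} :
    (c.approx σ n).isSome ↔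
      ∃ i ≤ σ.length, ∃ v, Code.evaln σ.length (c.toCode (σ.take i)) n = some v := by
  simp [approx, Option.isSome_iff_ne_none, Option.ne_none_iff_exists']

theorem approx_isSome_of_prefix {c : OracleCode} {σ τ : List Bool} {n : ℕ} (h : σ <+: τ)
    (hσ : (c.approx σ n).isSome) : (c.approx τ n).isSome := by
  obtain ⟨i, hi, v, hv⟩ := approx_isSome_iff.1 hσ
  have htake : τ.take i = σ.take i := by
    rw [List.prefix_iff_eq_take.1 h, List.take_take, min_eq_left hi]
  exact approx_isSome_iff.2 ⟨i, hi.trans h.length_le, v,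
    htake ▸ Code.evaln_mono h.length_le hv⟩

theorem exists_approx_initSeg_isSome {c : OracleCode} {A : ℕ → Bool} {n a : ℕ}
    (h : a ∈ c.eval (boolOracle A) n) : ∃ l, (c.approx (initSeg A l) n).isSome := by
  obtain ⟨m, hm⟩ := (eventually_mem_eval (eventually_mem_stringOracle_initSeg A) c h).exists
  rw [← eval_toCode] at hm
  obtain ⟨k, hk⟩ := Code.evaln_complete.1 hm
  refine ⟨max m k, approx_isSome_iff.2 ⟨m, ?_, a, ?_⟩⟩
  · simp [length_initSeg]
  · rw [take_initSeg A (le_max_left m k), length_initSeg]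
    exact Code.evaln_mono (le_max_right m k) hk

end OracleCode

def paths (T : List Bool → Bool) : Set (ℕ → Bool) := {A | ∀ n, T (initSeg A n) = true}

theorem isClosed_setOf_initSeg_mem (S : Set (List Bool)) (n : ℕ) :
    IsClosed {A : ℕ → Bool | initSeg A n ∈ S} := by
  simp_rw [initSeg_eq_ofFn]
  have : Continuous fun (A : ℕ → Bool) (i : Fin n) => A i :=
    continuous_pi fun i => continuous_apply (i : ℕ)
  exact (isClosed_discrete {v : Fin n → Bool | List.ofFn v ∈ S}).preimage this

theorem isClosed_paths (T : List Bool → Bool) : IsClosed (paths T) := by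
  rw [paths, Set.ofPred_forall]
  exact isClosed_iInter fun n => isClosed_setOf_initSeg_mem {σ | T σ = true} n

structure InfiniteComputableTree where
  tree : List Bool → Bool
  computable : Computable tree
  prefix_closed : ∀ σ τ : List Bool, σ <+: τ → tree τ = true → tree σ = true
  exists_of_length : ∀ l, ∃ σ : List Bool, σ.length = l ∧ tree σ = true

theorem InfiniteComputableTree.paths_nonempty (S : InfiniteComputableTree) :
    (paths S.tree).Nonempty := by
  have hlevel (n : ℕ) : {A : ℕ → Bool | S.tree (initSeg A n) = true}.Nonempty := by
    obtain ⟨σ, rfl, hσ⟩ := S.exists_of_length n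
    refine ⟨fun i => σ.getD i false, ?_⟩
    have : initSeg (fun i => σ.getD i false) σ.length = σ := by
      refine List.ext_getElem (by simp [initSeg]) fun i hi _ => ?_
      simp_all [initSeg]
    exact (congrArg S.tree this).trans hσ
  obtain ⟨A, hA⟩ := IsCompact.nonempty_iInter_of_sequence_nonempty_isCompact_isClosed
    (fun n => {A | S.tree (initSeg A n) = true})
    (fun n A hA => S.prefix_closed _ _ (initSeg_prefix A n.le_succ) hA) hlevel
    (isClosed_setOf_initSeg_mem {σ | S.tree σ = true} 0).isCompact
    (fun n => isClosed_setOf_initSeg_mem {σ | S.tree σ = true} n)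
  exact ⟨A, fun n => Set.mem_iInter.1 hA n⟩

theorem primrec_pow : Primrec₂ ((· ^ ·) : ℕ → ℕ → ℕ) :=
  ((Primrec.nat_iff.2 Nat.Primrec.pow).comp Primrec₂.natPair).of_eq fun p => by simp

theorem primrec_testBit : Primrec₂ Nat.testBit :=
  (Primrec.eq.decide.comp (Primrec.nat_mod.comp (Primrec.nat_div.comp Primrec.fst
    (primrec_pow.comp (Primrec.const 2) Primrec.snd)) (Primrec.const 2)) (Primrec.const 1)).of_eq
    fun _ => Nat.testBit_eq_decide_div_mod_eq.symm

def binaryString (l e : ℕ) : List Bool := (List.range l).map e.testBit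

theorem primrec_binaryString : Primrec₂ binaryString :=
  Primrec.list_map (Primrec.list_range.comp Primrec.fst)
    (primrec_testBit.comp (Primrec.snd.comp Primrec.fst) Primrec.snd).to₂

theorem length_binaryString (l e : ℕ) : (binaryString l e).length = l := by simp [binaryString]

theorem exists_binaryString_eq (σ : List Bool) :
    ∃ e < 2 ^ σ.length, binaryString σ.length e = σ :=
  ⟨(BitVec.ofBoolListLE σ).toNat, BitVec.isLt _, List.ext_getElem (by simp [binaryString])
    fun i _ hi => by
      simp only [binaryString, List.getElem_map, List.getElem_range, BitVec.testBit_toNat,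
        BitVec.getLsbD_ofBoolListLE, List.getD_eq_getElem _ _ hi]⟩

def optionMax (F : ℕ → Option ℕ) : ℕ → Option ℕ
  | 0 => some 0
  | N + 1 => (optionMax F N).bind fun M => (F N).map (max M)

theorem optionMax_isSome {F : ℕ → Option ℕ} {N : ℕ} (h : ∀ e < N, (F e).isSome) :
    (optionMax F N).isSome := by
  induction N with
  | zero => rfl
  | succ N ih =>
    obtain ⟨M, hM⟩ := Option.isSome_iff_exists.1 (ih fun e he => h e (he.trans N.lt_succ_self))
    obtain ⟨v, hv⟩ := Option.isSome_iff_exists.1 (h N N.lt_succ_self)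
    simp [optionMax, hM, hv]

theorem exists_le_of_optionMax_eq_some {F : ℕ → Option ℕ} {N M e : ℕ}
    (h : optionMax F N = some M) (he : e < N) : ∃ v, F e = some v ∧ v ≤ M := by
  induction N generalizing M with
  | zero => exact absurd he (Nat.not_lt_zero e)
  | succ N ih =>
    simp only [optionMax, Option.bind_eq_some_iff, Option.map_eq_some_iff] at h
    obtain ⟨M', hM', w, hw, rfl⟩ := h
    rcases Nat.lt_succ_iff_lt_or_eq.1 he with he | rfl
    · obtain ⟨v, hv, hvM⟩ := ih hM' he
      exact ⟨v, hv, hvM.trans (le_max_left _ _)⟩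
    · exact ⟨w, hw, le_max_right _ _⟩

theorem computable_optionMax {α : Type*} [Primcodable α] {F : α → ℕ → Option ℕ} {N : α → ℕ}
    (hF : Computable₂ F) (hN : Computable N) : Computable fun a => optionMax (F a) (N a) := by
  have hstep : Computable₂ fun (a : α) (p : ℕ × Option ℕ) =>
      p.2.bind fun M => (F a p.1).map (max M) :=
    Computable.option_bind (Computable.snd.comp Computable.snd)
      (Computable.option_map (hF.comp (Computable.fst.comp Computable.fst)
        (Computable.fst.comp (Computable.snd.comp Computable.fst)))
        (Primrec.nat_max.to_comp.comp (Computable.snd.comp Computable.fst)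
          Computable.snd).to₂).to₂
  refine (Computable.nat_rec hN (Computable.const (some 0)) hstep).of_eq fun a => ?_
  induction N a with
  | zero => rfl
  | succ N ih => simp [optionMax, ih]

def IsComputablyDominated (f : ℕ → ℕ) : Prop := ∃ g : ℕ → ℕ, Computable g ∧ ∀ n, f n ≤ g n

namespace OracleCode

/-- A bound for the values of `c` on `n` found along the strings of length `l` in `T`, or `none`
if `c` has not yet been seen to converge along all of them. -/
noncomputable def levelBound (c : OracleCode) (T : List Bool → Bool) (n l : ℕ) : Option ℕ :=
  optionMax (fun e => bif T (binaryString l e) then c.approx (binaryString l e) n else some 0)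
    (2 ^ l)

theorem computable_levelBound (c : OracleCode) {T : List Bool → Bool} (hT : Computable T) :
    Computable₂ (c.levelBound T) := by
  have hstr : Primrec fun p : (ℕ × ℕ) × ℕ => binaryString p.1.2 p.2 :=
    primrec_binaryString.comp (Primrec.snd.comp Primrec.fst) Primrec.snd
  refine computable_optionMax (Computable.cond (hT.comp hstr.to_comp)
    ((c.primrec_approx.comp hstr (Primrec.fst.comp Primrec.fst)).to_comp) (Computable.const _)).to₂
    (primrec_pow.comp (Primrec.const 2) Primrec.snd).to_comp |>.to₂

theorem levelBound_isSome (c : OracleCode) {T : List Bool → Bool} {n l : ℕ}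
    (h : ∀ σ : List Bool, σ.length = l → T σ = true → (c.approx σ n).isSome) :
    (c.levelBound T n l).isSome := by
  refine optionMax_isSome fun e _ => ?_
  cases hT : T (binaryString l e)
  · rfl
  · simpa [hT] using h _ (length_binaryString l e) hT

theorem le_of_levelBound_eq_some {c : OracleCode} {T : List Bool → Bool} {n l M a : ℕ}
    (h : c.levelBound T n l = some M) {A : ℕ → Bool} (hA : A ∈ paths T)
    (ha : a ∈ c.eval (boolOracle A) n) : a ≤ M := by
  obtain ⟨e, he, hstr⟩ := exists_binaryString_eq (initSeg A l)
  rw [length_initSeg] at he hstr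
  obtain ⟨v, hv, hvM⟩ := exists_le_of_optionMax_eq_some h he
  rw [hstr, hA l, cond_true] at hv
  have hva : v ∈ c.eval (boolOracle A) n :=
    c.eval_mono (stringOracle_initSeg_le A l) n _ (mem_eval_of_approx_eq_some hv)
  exact Part.mem_unique ha hva ▸ hvM

theorem exists_computable_bound (c : OracleCode) {T : List Bool → Bool} (hT : Computable T)
    (htot : ∀ n, ∃ l, ∀ σ : List Bool, σ.length = l → T σ = true → (c.approx σ n).isSome) :
    ∃ g : ℕ → ℕ, Computable g ∧ ∀ A ∈ paths T, ∀ n, ∀ a ∈ c.eval (boolOracle A) n, a ≤ g n := by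
  have hdom (n : ℕ) : (Nat.rfindOpt (c.levelBound T n)).Dom := by
    obtain ⟨l, hl⟩ := htot n
    obtain ⟨M, hM⟩ := Option.isSome_iff_exists.1 (c.levelBound_isSome hl)
    exact Nat.rfindOpt_dom.2 ⟨l, M, hM⟩
  refine ⟨fun n => (Nat.rfindOpt (c.levelBound T n)).get (hdom n), ?_, fun A hA n a ha => ?_⟩
  · exact Partrec.of_eq_tot (Partrec.rfindOpt (c.computable_levelBound hT))
      fun n => Part.get_mem _
  · obtain ⟨l, hl⟩ := Nat.rfindOpt_spec (Part.get_mem (hdom n))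
    exact le_of_levelBound_eq_some hl hA ha

end OracleCode

namespace InfiniteComputableTree

theorem exists_subtree_forcing (S : InfiniteComputableTree) (c : OracleCode) :
    ∃ S' : InfiniteComputableTree, paths S'.tree ⊆ paths S.tree ∧
      ∀ A ∈ paths S'.tree, ∀ f : ℕ → ℕ, (∀ n, f n ∈ c.eval (boolOracle A) n) →
        IsComputablyDominated f := by
  by_cases hdiv : ∃ n, ∀ l, ∃ σ : List Bool, σ.length = l ∧
      (S.tree σ && !(c.approx σ n).isSome) = true
  · obtain ⟨n, hn⟩ := hdiv
    refine ⟨⟨fun σ => S.tree σ && !(c.approx σ n).isSome, ?_, fun σ τ hστ hτ => ?_, hn⟩,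
      fun A hA l => (Bool.and_eq_true _ _ ▸ hA l).1, fun A hA f hf => ?_⟩
    · exact (Primrec.dom_bool₂ fun a b => a && !b).to_comp.comp S.computable
        (Primrec.option_isSome.comp (c.primrec_approx.comp Primrec.id (Primrec.const n))).to_comp
    · simp only [Bool.and_eq_true, Bool.not_eq_true'] at hτ ⊢
      refine ⟨S.prefix_closed σ τ hστ hτ.1, ?_⟩
      cases hσ : (c.approx σ n).isSome
      · rfl
      · simpa [OracleCode.approx_isSome_of_prefix hστ hσ] using hτ.2
    · obtain ⟨l, hl⟩ := c.exists_approx_initSeg_isSome (hf n)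
      simpa [hl] using hA l
  · push Not at hdiv
    have htot (n : ℕ) : ∃ l, ∀ σ : List Bool, σ.length = l → S.tree σ = true →
        (c.approx σ n).isSome := by
      obtain ⟨l, hl⟩ := hdiv n
      exact ⟨l, fun σ hσ hT => by simpa [hT, Option.isSome_iff_ne_none] using hl σ hσ⟩
    obtain ⟨g, hg, hbound⟩ := c.exists_computable_bound S.computable htot
    exact ⟨S, subset_rfl, fun A hA f hf => ⟨g, hg, fun n => hbound A hA n _ (hf n)⟩⟩

theorem exists_mem_paths_forall_dominated (S : InfiniteComputableTree) :
    ∃ A ∈ paths S.tree, ∀ (c : OracleCode) (f : ℕ → ℕ),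
      (∀ n, f n ∈ c.eval (boolOracle A) n) → IsComputablyDominated f := by
  choose step hstep_sub hstep_dom using exists_subtree_forcing
  let seq (e : ℕ) : InfiniteComputableTree :=
    Nat.rec S (fun e S' => step S' (OracleCode.ofNat e)) e
  obtain ⟨A, hA⟩ := IsCompact.nonempty_iInter_of_sequence_nonempty_isCompact_isClosed
    (fun e => paths (seq e).tree) (fun e => hstep_sub _ _) (fun e => (seq e).paths_nonempty)
    (isClosed_paths _).isCompact (fun e => isClosed_paths _)
  rw [Set.mem_iInter] at hA
  refine ⟨A, hA 0, fun c => ?_⟩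
  simpa only [OracleCode.ofNat_toNat] using hstep_dom (seq c.toNat) _ A (hA (c.toNat + 1))

end InfiniteComputableTree

/-- Every nonempty `Π⁰₁` class contains a member of hyperimmune-free degree. -/
theorem Pi01_class_has_member_of_hyperimmune_free_degree (P : Set (ℕ → Bool))
    (hP : IsPi01Class P) (hne : P.Nonempty) :
    ∃ A ∈ P, ∀ f : ℕ → ℕ,
      OracleRecursiveIn (boolOracle A) (fun n => Part.some (f n)) →
      ∃ g : ℕ → ℕ, Computable g ∧ ∀ n, f n ≤ g n := by
  obtain ⟨T, hT, hclosed, hPT⟩ := hP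
  obtain ⟨A₀, hA₀⟩ := hne
  let S : InfiniteComputableTree :=
    ⟨T, hT, hclosed, fun l => ⟨initSeg A₀ l, length_initSeg A₀ l, (hPT A₀).1 hA₀ l⟩⟩
  obtain ⟨A, hA, hdom⟩ := S.exists_mem_paths_forall_dominated
  refine ⟨A, (hPT A).2 hA, fun f hf => ?_⟩
  obtain ⟨c, hc⟩ := OracleCode.exists_eval_eq hf
  exact hdom c f fun n => hc ▸ Part.mem_some (f n)
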